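/- arXiv:1605.08034 — 7 statements merged into one kernel-verified Lean document; each statement's English description precedes it below -/
import Mathlib

section
/- Let d ≥ 1 and let A_1, …, A_N be real symmetric d×d matrices. Then (A_1, …, A_N) has the phase retrieval property on ℝ^d if and only if there exist no nonzero vectors v, u ∈ ℝ^d such that vᵀA_ju = 0 for all 1 ≤ j ≤ N. -/
open Matrix

/-- A tuple of real symmetric `d×d` matrices has the phase retrieval property on `ℝ^d`
if equality of all quadratic measurements implies equality up to sign. -/
def PhaseRetrievableR {d N : ℕ} (A : Fin N → Matrix (Fin d) (Fin d) ℝ) : Prop :=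
  ∀ x y : Fin d → ℝ,
    (∀ j, x ⬝ᵥ (A j) *ᵥ x = y ⬝ᵥ (A j) *ᵥ y) → x = y ∨ x = -y

lemma symm_bilin {d : ℕ} {M : Matrix (Fin d) (Fin d) ℝ} (hM : M.IsSymm)
    (v u : Fin d → ℝ) : v ⬝ᵥ M *ᵥ u = u ⬝ᵥ M *ᵥ v := by
  rw [Matrix.dotProduct_mulVec, ← Matrix.mulVec_transpose, hM.eq,
    dotProduct_comm]

theorem stmt_0 (d N : ℕ) (hd : 1 ≤ d) (A : Fin N → Matrix (Fin d) (Fin d) ℝ)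
    (hA : ∀ j, (A j).IsSymm) :
    PhaseRetrievableR A ↔
      ¬ ∃ v u : Fin d → ℝ, v ≠ 0 ∧ u ≠ 0 ∧ ∀ j, v ⬝ᵥ (A j) *ᵥ u = 0 := by
  constructor
  · rintro hPR ⟨v, u, hv, hu, h0⟩
    have hmeas : ∀ j, (v + u) ⬝ᵥ (A j) *ᵥ (v + u) = (v - u) ⬝ᵥ (A j) *ᵥ (v - u) := by
      intro j
      have huv : u ⬝ᵥ (A j) *ᵥ v = 0 := by rw [symm_bilin (hA j)]; exact h0 j
      simp [Matrix.mulVec_add, Matrix.mulVec_sub, dotProduct_add,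
        dotProduct_sub, add_dotProduct, sub_dotProduct,
        h0 j, huv]
    rcases hPR _ _ hmeas with h | h
    · apply hu
      have : u + u = 0 := by linear_combination (norm := module) h
      have h2 : (2 : ℝ) • u = 0 := by rw [two_smul]; exact this
      simpa using (smul_eq_zero.mp h2).resolve_left (by norm_num)
    · apply hv
      have : v + v = 0 := by linear_combination (norm := module) h
      have h2 : (2 : ℝ) • v = 0 := by rw [two_smul]; exact this
      simpa using (smul_eq_zero.mp h2).resolve_left (by norm_num)
  · intro h x y hxy
    by_contra hcon
    push_neg at hcon
    apply h
    refine ⟨x + y, x - y, ?_, ?_, ?_⟩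
    · intro h0
      apply hcon.2
      have : x = -y := by linear_combination (norm := module) h0
      exact this
    · intro h0
      apply hcon.1
      linear_combination (norm := module) h0
    · intro j
      have hsym : x ⬝ᵥ (A j) *ᵥ y = y ⬝ᵥ (A j) *ᵥ x := symm_bilin (hA j) x y
      have := hxy j
      simp [Matrix.mulVec_add, Matrix.mulVec_sub, dotProduct_add,
        dotProduct_sub, add_dotProduct, sub_dotProduct]
      linarith
end

section
/- Let d ≥ 1 and let A_1, …, A_N be real symmetric d×d matrices. Then (A_1, …, A_N) has the phase retrieval property on ℝ^d if and only if for every nonzero u ∈ ℝ^d the vectors A_1u, …, A_Nu span ℝ^d. -/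
open Matrix

/-- the linear map `w ↦ w ⬝ᵥ v`. -/
def dotLin {d : ℕ} (v : Fin d → ℝ) : (Fin d → ℝ) →ₗ[ℝ] ℝ where
  toFun w := w ⬝ᵥ v
  map_add' x y := add_dotProduct x y v
  map_smul' c x := smul_dotProduct c x v

lemma exists_ortho {d : ℕ} (W : Submodule ℝ (Fin d → ℝ)) (h : W ≠ ⊤) :
    ∃ v : Fin d → ℝ, v ≠ 0 ∧ ∀ w ∈ W, w ⬝ᵥ v = 0 := by
  obtain ⟨f, hf0, hfW⟩ := W.exists_dual_map_eq_bot_of_lt_top h.lt_top inferInstance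
  set v : Fin d → ℝ := fun i => f (Pi.single i 1) with hv
  have key : ∀ w : Fin d → ℝ, f w = w ⬝ᵥ v := by
    intro w
    have hw : w = ∑ i, w i • (Pi.single i 1 : Fin d → ℝ) := by
      ext j; simp [Pi.single_apply, Finset.sum_apply]
    rw [hw, map_sum]
    simp [dotProduct, Finset.sum_apply, Pi.single_apply, mul_comm, hv]
  refine ⟨v, ?_, ?_⟩
  · intro hv0
    exact hf0 (LinearMap.ext fun w => by rw [key w, hv0]; simp)
  · intro w hw
    rw [← key w]
    have : f w ∈ W.map f := Submodule.mem_map_of_mem hw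
    rw [hfW] at this
    simpa using this

lemma sym_dot {d : ℕ} (A : Matrix (Fin d) (Fin d) ℝ) (hA : A.IsSymm) (x y : Fin d → ℝ) :
    x ⬝ᵥ A *ᵥ y = (A *ᵥ x) ⬝ᵥ y := by
  rw [dotProduct_mulVec, ← mulVec_transpose, hA.eq]

/-- polarization identity for symmetric matrices -/
lemma polar {d : ℕ} (A : Matrix (Fin d) (Fin d) ℝ) (hA : A.IsSymm) (x y : Fin d → ℝ) :
    x ⬝ᵥ A *ᵥ x - y ⬝ᵥ A *ᵥ y = (x + y) ⬝ᵥ A *ᵥ (x - y) := by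
  have h : y ⬝ᵥ A *ᵥ x = x ⬝ᵥ A *ᵥ y := by
    rw [sym_dot A hA y x, dotProduct_comm]
  simp only [mulVec_add, mulVec_sub, add_dotProduct, dotProduct_add, dotProduct_sub]
  linarith [h]

theorem stmt_1 (d N : ℕ) (hd : 1 ≤ d) (A : Fin N → Matrix (Fin d) (Fin d) ℝ)
    (hA : ∀ j, (A j).IsSymm) :
    PhaseRetrievableR A ↔
      ∀ u : Fin d → ℝ, u ≠ 0 →
        Submodule.span ℝ (Set.range fun j => (A j) *ᵥ u) = ⊤ := by
  constructor
  · intro hPR u hu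
    by_contra hne
    obtain ⟨v, hv0, hvW⟩ := exists_ortho _ hne
    have horth : ∀ j, (A j *ᵥ u) ⬝ᵥ v = 0 := fun j =>
      hvW _ (Submodule.subset_span ⟨j, rfl⟩)
    have hmeas : ∀ j, (u + v) ⬝ᵥ (A j) *ᵥ (u + v) = (u - v) ⬝ᵥ (A j) *ᵥ (u - v) := by
      intro j
      have := polar (A j) (hA j) (u + v) (u - v)
      have h2 : (u + v) + (u - v) = (2 : ℝ) • u := by module
      have h3 : (u + v) - (u - v) = (2 : ℝ) • v := by module
      rw [h2, h3, mulVec_smul, smul_dotProduct, dotProduct_smul,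
        sym_dot (A j) (hA j) u v, horth j] at this
      simp only [mulVec_add, mulVec_sub, dotProduct_add, dotProduct_sub,
        add_dotProduct, sub_dotProduct, smul_eq_mul, smul_zero, mul_zero] at this ⊢
      linarith [this]
    rcases hPR _ _ hmeas with h | h
    · apply hv0
      have : (2 : ℝ) • v = 0 := by
        have := sub_eq_zero.mpr h
        calc (2 : ℝ) • v = (u + v) - (u - v) := by module
        _ = 0 := this
      simpa using this
    · apply hu
      have : (2 : ℝ) • u = 0 := by
        have : (u + v) + (u - v) = 0 := by rw [h]; simp
        calc (2 : ℝ) • u = (u + v) + (u - v) := by module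
        _ = 0 := this
      simpa using this
  · intro hspan x y hxy
    by_cases hu : x + y = 0
    · right; linear_combination (norm := module) hu
    · left
      have horth : ∀ j, (A j *ᵥ (x + y)) ⬝ᵥ (x - y) = 0 := by
        intro j
        have := polar (A j) (hA j) x y
        rw [hxy j, sub_self] at this
        rw [← sym_dot (A j) (hA j), ← this]
      have hker : Submodule.span ℝ (Set.range fun j => (A j) *ᵥ (x + y))
          ≤ LinearMap.ker (dotLin (x - y)) := by
        rw [Submodule.span_le]
        rintro w ⟨j, rfl⟩
        exact horth j
      rw [hspan _ hu] at hker
      have : (x - y) ⬝ᵥ (x - y) = 0 :=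
        LinearMap.mem_ker.mp (hker (Submodule.mem_top (x := x - y)))
      have := dotProduct_self_eq_zero.mp this
      linear_combination (norm := module) this
end

section
/- Let d ≥ 1 and let A_1, …, A_N be real symmetric d×d matrices. Then (A_1, …, A_N) has the phase retrieval property on ℝ^d if and only if the only real d×d matrix Q of rank at most 1 satisfying Tr(A_jQ) = 0 for all 1 ≤ j ≤ N is Q = 0. -/
open Matrix

/-!
For symmetric `A` the difference of two measurements factors as
`xᵀAx - yᵀAy = (x + y)ᵀ A (x - y) = Tr (A (x - y)(x + y)ᵀ)`, and `(x, y) ↦ (x - y, x + y)` is a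
bijection of `ℝ^d × ℝ^d`. So phase retrieval says exactly that `Tr (A_j u vᵀ) = 0` for all `j`
forces `u = 0` or `v = 0`, i.e. `u vᵀ = 0`; and the matrices `u vᵀ` are exactly those of rank
at most one.
-/

namespace Matrix

variable {K R m n : Type*} [Fintype n]

theorem exists_eq_vecMulVec_of_rank_le_one [Field K] [DecidableEq n] {Q : Matrix m n K}
    (hQ : Q.rank ≤ 1) : ∃ u v, Q = vecMulVec u v := by
  obtain ⟨w, hw⟩ := ((Submodule.finrank_le_one_iff_isPrincipal _).mp hQ).principal
  have hcol : ∀ j, ∃ c : K, c • w = Q *ᵥ Pi.single j 1 := fun j =>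
    Submodule.mem_span_singleton.mp (hw ▸ LinearMap.mem_range_self Q.mulVecLin _)
  choose c hc using hcol
  refine ⟨w, c, ext fun i j => ?_⟩
  rw [vecMulVec_apply, mul_comm, ← smul_eq_mul, ← Pi.smul_apply, hc, mulVec_single_one]
  rfl

theorem trace_mul_vecMulVec [CommSemiring R] (A : Matrix n n R) (u v : n → R) :
    trace (A * vecMulVec u v) = v ⬝ᵥ A *ᵥ u := by
  rw [mul_vecMulVec, trace_vecMulVec, dotProduct_comm]

theorem IsSymm.dotProduct_mulVec_comm [CommSemiring R] {A : Matrix n n R} (hA : A.IsSymm)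
    (x y : n → R) : x ⬝ᵥ A *ᵥ y = y ⬝ᵥ A *ᵥ x := by
  rw [← dotProduct_transpose_mulVec, hA.eq]

theorem IsSymm.dotProduct_mulVec_sub_dotProduct_mulVec_eq_trace [CommRing R] {A : Matrix n n R}
    (hA : A.IsSymm) (x y : n → R) :
    x ⬝ᵥ A *ᵥ x - y ⬝ᵥ A *ᵥ y = trace (A * vecMulVec (x - y) (x + y)) := by
  rw [trace_mul_vecMulVec, mulVec_sub, add_dotProduct, dotProduct_sub, dotProduct_sub,
    hA.dotProduct_mulVec_comm y x]
  abel

end Matrix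

theorem phaseRetrievableR_iff {d N : ℕ} {A : Fin N → Matrix (Fin d) (Fin d) ℝ}
    (hA : ∀ j, (A j).IsSymm) :
    PhaseRetrievableR A ↔
      ∀ u v : Fin d → ℝ, (∀ j, trace (A j * vecMulVec u v) = 0) → u = 0 ∨ v = 0 := by
  simp only [PhaseRetrievableR, ← sub_eq_zero (a := _ ⬝ᵥ _),
    (hA _).dotProduct_mulVec_sub_dotProduct_mulVec_eq_trace]
  constructor
  · intro hPR u v huv
    obtain ⟨x, y, rfl, rfl⟩ : ∃ x y : Fin d → ℝ, x - y = u ∧ x + y = v :=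
      ⟨(2⁻¹ : ℝ) • (v + u), (2⁻¹ : ℝ) • (v - u), by module, by module⟩
    rw [sub_eq_zero, add_eq_zero_iff_eq_neg]
    exact hPR x y huv
  · intro h x y hxy
    rw [← sub_eq_zero, ← add_eq_zero_iff_eq_neg]
    exact h _ _ hxy

theorem stmt_2_general (d N : ℕ) (A : Fin N → Matrix (Fin d) (Fin d) ℝ)
    (hA : ∀ j, (A j).IsSymm) :
    PhaseRetrievableR A ↔
      ∀ Q : Matrix (Fin d) (Fin d) ℝ, Q.rank ≤ 1 →
        (∀ j, Matrix.trace (A j * Q) = 0) → Q = 0 := by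
  rw [phaseRetrievableR_iff hA]
  constructor
  · intro h Q hQ hQA
    obtain ⟨u, v, rfl⟩ := exists_eq_vecMulVec_of_rank_le_one hQ
    exact vecMulVec_eq_zero.mpr (h u v hQA)
  · intro h u v huv
    exact vecMulVec_eq_zero.mp (h _ (rank_vecMulVec_le u v) huv)

theorem stmt_2 (d N : ℕ) (hd : 1 ≤ d) (A : Fin N → Matrix (Fin d) (Fin d) ℝ)
    (hA : ∀ j, (A j).IsSymm) :
    PhaseRetrievableR A ↔
      ∀ Q : Matrix (Fin d) (Fin d) ℝ, Q.rank ≤ 1 →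
        (∀ j, Matrix.trace (A j * Q) = 0) → Q = 0 :=
  stmt_2_general d N A hA
end

section
/- Let d ≥ 1 and let A_1, …, A_N be complex Hermitian d×d matrices. Then (A_1, …, A_N) has the phase retrieval property on ℂ^d if and only if there exist no nonzero vectors v, u ∈ ℂ^d with u ≠ icv for every real number c, such that Re(v*A_ju) = 0 for all 1 ≤ j ≤ N (where v* denotes the conjugate transpose of v). -/
/-!
Write `v = x + y` and `u = x - y`. For Hermitian `A` the quadratic form is real and the cross
terms of `(x + y)* A (x - y)` add up to `conj z - z` with `z = x* A y`, so
`Re (v* A u) = x* A x - y* A y`: the measurements of `x` and `y` agree exactly when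
`Re (v* A_j u) = 0` for all `j`. On the other side, `x = b y` with `|b| = 1` means `v = 0` or
`u = ((b - 1)/(b + 1)) v`, and the Cayley transform `b ↦ (b - 1)/(b + 1)` maps the unit circle
minus `-1` onto the imaginary axis, with inverse `i c ↦ (1 + i c)/(1 - i c)`.
-/

open Matrix

/-- A tuple of complex Hermitian `d×d` matrices has the phase retrieval property on `ℂ^d`
if equality of all quadratic measurements implies equality up to a unimodular constant. -/
def PhaseRetrievableC {d N : ℕ} (A : Fin N → Matrix (Fin d) (Fin d) ℂ) : Prop :=
  ∀ x y : Fin d → ℂ,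
    (∀ j, star x ⬝ᵥ (A j) *ᵥ x = star y ⬝ᵥ (A j) *ᵥ y) →
      ∃ b : ℂ, ‖b‖ = 1 ∧ x = b • y

open ComplexConjugate

namespace Matrix

variable {n 𝕜 : Type*} [Fintype n] [RCLike 𝕜] {A : Matrix n n 𝕜}

lemma IsHermitian.star_dotProduct_mulVec_comm (hA : A.IsHermitian) (x y : n → 𝕜) :
    star y ⬝ᵥ A *ᵥ x = star (star x ⬝ᵥ A *ᵥ y) := by
  rw [star_dotProduct, star_mulVec, hA.eq, ← dotProduct_mulVec]

lemma IsHermitian.re_star_add_dotProduct_mulVec_sub (hA : A.IsHermitian) (x y : n → 𝕜) :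
    RCLike.re (star (x + y) ⬝ᵥ A *ᵥ (x - y)) =
      RCLike.re (star x ⬝ᵥ A *ᵥ x) - RCLike.re (star y ⬝ᵥ A *ᵥ y) := by
  simp only [star_add, add_dotProduct, mulVec_sub, dotProduct_sub, map_add, map_sub,
    hA.star_dotProduct_mulVec_comm x y, RCLike.star_def, RCLike.conj_re]
  ring

lemma IsHermitian.star_dotProduct_mulVec_self_eq_iff (hA : A.IsHermitian) (x y : n → 𝕜) :
    star x ⬝ᵥ A *ᵥ x = star y ⬝ᵥ A *ᵥ y ↔ RCLike.re (star (x + y) ⬝ᵥ A *ᵥ (x - y)) = 0 := by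
  rw [hA.re_star_add_dotProduct_mulVec_sub, sub_eq_zero, RCLike.ext_iff,
    hA.im_star_dotProduct_mulVec_self, hA.im_star_dotProduct_mulVec_self]
  simp

end Matrix

namespace Complex

lemma sub_one_div_add_one_eq_I_mul {b : ℂ} (hb : ‖b‖ = 1) :
    (b - 1) / (b + 1) = I * ((b - 1) / (b + 1)).im := by
  have hnormSq : b.re * b.re + b.im * b.im = 1 := by
    rw [← normSq_apply, normSq_eq_norm_sq, hb, one_pow]
  have hre : ((b - 1) / (b + 1)).re = 0 := by
    rw [div_re, ← add_div]
    convert zero_div _ using 2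
    simp only [sub_re, add_re, one_re, sub_im, add_im, one_im]
    linear_combination hnormSq
  apply Complex.ext <;> simp [hre]

lemma norm_one_add_I_mul_div_one_sub_I_mul (c : ℝ) : ‖(1 + I * c) / (1 - I * c)‖ = 1 := by
  have hconj : 1 - I * c = conj (1 + I * c) := by simp [sub_eq_add_neg]
  have hne : 1 + I * c ≠ 0 := fun h ↦ by simpa using congrArg re h
  rw [norm_div, hconj, norm_conj, div_self (norm_ne_zero_iff.mpr hne)]

lemma exists_norm_eq_one_smul_iff {E : Type*} [AddCommGroup E] [Module ℂ E] (x y : E) :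
    (∃ b : ℂ, ‖b‖ = 1 ∧ x = b • y) ↔ x + y = 0 ∨ ∃ c : ℝ, x - y = (I * c) • (x + y) := by
  constructor
  · rintro ⟨b, hb, rfl⟩
    rw [show b • y + y = (b + 1) • y by module, show b • y - y = (b - 1) • y by module]
    by_cases hb₁ : b + 1 = 0
    · exact .inl (by rw [hb₁, zero_smul])
    · refine .inr ⟨((b - 1) / (b + 1)).im, ?_⟩
      rw [← sub_one_div_add_one_eq_I_mul hb, smul_smul, div_mul_cancel₀ _ hb₁]
  · rintro (h | ⟨c, h⟩)
    · exact ⟨-1, by simp, by rw [neg_one_smul, eq_neg_iff_add_eq_zero, h]⟩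
    · refine ⟨(1 + I * c) / (1 - I * c), norm_one_add_I_mul_div_one_sub_I_mul c, ?_⟩
      have hne : 1 - I * c ≠ 0 := fun h ↦ by simpa using congrArg re h
      have hxy : (1 - I * c) • x = (1 + I * c) • y := by
        linear_combination (norm := module) h
      rw [div_eq_inv_mul, mul_smul, ← hxy, smul_smul, inv_mul_cancel₀ hne, one_smul]

end Complex

theorem stmt_4_general (d N : ℕ) (A : Fin N → Matrix (Fin d) (Fin d) ℂ)
    (hA : ∀ j, (A j).IsHermitian) :
    PhaseRetrievableC A ↔
      ¬ ∃ v u : Fin d → ℂ, v ≠ 0 ∧ u ≠ 0 ∧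
        (∀ c : ℝ, u ≠ (Complex.I * c) • v) ∧
        ∀ j, (star v ⬝ᵥ (A j) *ᵥ u).re = 0 := by
  have hmeas (x y : Fin d → ℂ) : (∀ j, star x ⬝ᵥ A j *ᵥ x = star y ⬝ᵥ A j *ᵥ y) ↔
      ∀ j, (star (x + y) ⬝ᵥ A j *ᵥ (x - y)).re = 0 :=
    forall_congr' fun j ↦ (hA j).star_dotProduct_mulVec_self_eq_iff x y
  constructor
  · rintro hPR ⟨v, u, hv, -, hu, hre⟩
    set x : Fin d → ℂ := (2 : ℂ)⁻¹ • (v + u)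
    set y : Fin d → ℂ := (2 : ℂ)⁻¹ • (v - u)
    have hsum : x + y = v := by module
    have hdiff : x - y = u := by module
    obtain h | ⟨c, hc⟩ := (Complex.exists_norm_eq_one_smul_iff x y).mp
      (hPR x y ((hmeas x y).mpr (by rwa [hsum, hdiff])))
    · exact hv (hsum ▸ h)
    · exact hu c (by rw [← hsum, ← hdiff, hc])
  · intro h x y hxy
    rw [Complex.exists_norm_eq_one_smul_iff]
    by_contra! hne
    exact h ⟨x + y, x - y, hne.1, by simpa using hne.2 0, hne.2, (hmeas x y).mp hxy⟩

theorem stmt_4 (d N : ℕ) (hd : 1 ≤ d) (A : Fin N → Matrix (Fin d) (Fin d) ℂ)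
    (hA : ∀ j, (A j).IsHermitian) :
    PhaseRetrievableC A ↔
      ¬ ∃ v u : Fin d → ℂ, v ≠ 0 ∧ u ≠ 0 ∧
        (∀ c : ℝ, u ≠ (Complex.I * c) • v) ∧
        ∀ j, (star v ⬝ᵥ (A j) *ᵥ u).re = 0 :=
  stmt_4_general d N A hA
end

section
/- Let d, N ≥ 1 and suppose (A_1, …, A_N) is a tuple of complex Hermitian d×d matrices having the phase retrieval property on ℂ^d. Then there exists ε > 0 such that every tuple (B_1, …, B_N) of complex Hermitian d×d matrices with ‖B_j − A_j‖ < ε for all 1 ≤ j ≤ N (in any fixed matrix norm, e.g. the Frobenius norm) also has the phase retrieval property on ℂ^d. In other words, the set of phase retrievable Hermitian tuples is open in the space of N-tuples of Hermitian d×d matrices. -/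
open Matrix

/-- The Frobenius norm of a complex matrix. -/
noncomputable def frobNorm {d : ℕ} (M : Matrix (Fin d) (Fin d) ℂ) : ℝ :=
  Real.sqrt (∑ k, ∑ l, ‖M k l‖ ^ 2)

/-!
Phase retrieval for `A` says that `Q ↦ (tr (A j * Q))_j` does not vanish on any nonzero
`Q = x x* - y y*`. Applying a hyperbolic rotation `(x, φ y) ↦ (c x + s φ y, s x + c φ y)`,
with `c² - s² = 1` and `|φ| = 1`, leaves `Q` unchanged and can make `x ⟂ y`; for orthogonal
`x, y` one has `‖Q‖² = ‖x‖⁴ + ‖y‖⁴` (Frobenius norm), so the matrices `Q` of norm one are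
parametrised by a compact set of pairs. On it `∑ j |tr (A j * Q)|` has a positive minimum `c`,
and since `|tr ((B j - A j) * Q)| ≤ ‖B j - A j‖ ‖Q‖`, every `B` with `‖B j - A j‖ < c / (N + 1)`
keeps `∑ j |tr (B j * Q)| > 0` on that set.
-/

open scoped Matrix.Norms.Frobenius ComplexConjugate InnerProductSpace

namespace Matrix

variable {m n α : Type*} [Fintype m] [Fintype n]

lemma frobenius_norm_eq_sqrt [SeminormedAddCommGroup α] (M : Matrix m n α) :
    ‖M‖ = √(∑ i, ∑ j, ‖M i j‖ ^ 2) := by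
  rw [frobenius_norm_def, Real.sqrt_eq_rpow]
  simp only [Real.rpow_two]

lemma frobenius_norm_sq_eq_re_trace {𝕜 : Type*} [RCLike 𝕜] (M : Matrix m n 𝕜) :
    ‖M‖ ^ 2 = RCLike.re (trace (Mᴴ * M)) := by
  rw [frobenius_norm_eq_sqrt, Real.sq_sqrt (by positivity), Finset.sum_comm]
  simp [trace, mul_apply, RCLike.conj_mul]

lemma norm_trace_mul_le [SeminormedRing α] (M : Matrix m n α) (Q : Matrix n m α) :
    ‖trace (M * Q)‖ ≤ ‖M‖ * ‖Q‖ :=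
  calc ‖trace (M * Q)‖ ≤ ∑ i, ∑ j, ‖M i j‖ * ‖Qᵀ i j‖ := by
        simp only [trace, diag_apply, mul_apply, transpose_apply]
        refine (norm_sum_le _ _).trans (Finset.sum_le_sum fun i _ => ?_)
        exact (norm_sum_le _ _).trans (Finset.sum_le_sum fun j _ => norm_mul_le _ _)
    _ ≤ ‖M‖ * ‖Qᵀ‖ := by
        simp only [frobenius_norm_eq_sqrt, ← Finset.sum_product']
        exact Real.sum_mul_le_sqrt_mul_sqrt _ _ _
    _ = ‖M‖ * ‖Q‖ := by rw [frobenius_norm_transpose]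

end Matrix

namespace PhaseRetrieval

open Real

lemma exists_hyperbolic_cos_sin {S r : ℝ} (hr : 0 ≤ r) (hrS : 2 * r < S) :
    ∃ c s : ℝ, c ^ 2 - s ^ 2 = 1 ∧ c * s * S + (c ^ 2 + s ^ 2) * r = 0 := by
  have hS : 0 < S := by linarith
  set w := 2 * r / S with hw_def
  have hw : w ∈ Set.Ioo (-1) 1 :=
    ⟨by linarith [show 0 ≤ w by positivity], (div_lt_one hS).2 hrS⟩
  set t := artanh w / 2
  have hsinh : 2 * sinh t * cosh t = w / √(1 - w ^ 2) := by
    rw [← sinh_two_mul, mul_div_cancel₀ _ two_ne_zero, sinh_artanh hw]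
  have hcosh : cosh t ^ 2 + sinh t ^ 2 = 1 / √(1 - w ^ 2) := by
    rw [← cosh_two_mul, mul_div_cancel₀ _ two_ne_zero, cosh_artanh hw]
  refine ⟨cosh t, -sinh t, by rw [neg_sq, cosh_sq_sub_sinh_sq], ?_⟩
  rw [neg_sq, hcosh, mul_neg, show cosh t * sinh t = w / √(1 - w ^ 2) / 2 by linarith, hw_def]
  field_simp
  ring

variable {n : Type*}

def outerDiff (x y : EuclideanSpace ℂ n) : Matrix n n ℂ :=
  vecMulVec x.ofLp (star x.ofLp) - vecMulVec y.ofLp (star y.ofLp)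

lemma outerDiff_apply (x y : EuclideanSpace ℂ n) (k l : n) :
    outerDiff x y k l = x k * conj (x l) - y k * conj (y l) := rfl

lemma isHermitian_outerDiff (x y : EuclideanSpace ℂ n) : (outerDiff x y).IsHermitian := by
  simp [outerDiff, IsHermitian, conjTranspose_vecMulVec]

lemma outerDiff_real_smul (t : ℝ) (x y : EuclideanSpace ℂ n) :
    outerDiff ((t : ℂ) • x) ((t : ℂ) • y) = (t ^ 2 : ℝ) • outerDiff x y := by
  ext k l
  simp only [outerDiff_apply, PiLp.smul_apply, smul_eq_mul, map_mul, Complex.conj_ofReal,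
    Matrix.smul_apply, Complex.real_smul]
  push_cast
  ring

lemma continuous_outerDiff :
    Continuous fun p : EuclideanSpace ℂ n × EuclideanSpace ℂ n => outerDiff p.1 p.2 := by
  unfold outerDiff
  fun_prop

variable [Fintype n]

lemma trace_mul_outerDiff (M : Matrix n n ℂ) (x y : EuclideanSpace ℂ n) :
    trace (M * outerDiff x y) =
      star x.ofLp ⬝ᵥ M *ᵥ x.ofLp - star y.ofLp ⬝ᵥ M *ᵥ y.ofLp := by
  simp [outerDiff, Matrix.mul_sub, mul_vecMulVec, dotProduct_comm]

lemma outerDiff_eq_zero_iff {x y : EuclideanSpace ℂ n} :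
    outerDiff x y = 0 ↔ ∃ b : ℂ, ‖b‖ = 1 ∧ x = b • y := by
  constructor
  · intro h
    have h' := sub_eq_zero.1 h
    have hvec : ⟪x, x⟫_ℂ • x = ⟪y, x⟫_ℂ • y := by
      have := congrArg (· *ᵥ x.ofLp) h'
      simp only [vecMulVec_mulVec, op_smul_eq_smul] at this
      rw [dotProduct_comm (star x.ofLp), dotProduct_comm (star y.ofLp)] at this
      exact WithLp.ofLp_injective 2 this
    have hnorm : ‖x‖ = ‖y‖ := by
      have := congrArg trace h'
      rw [trace_vecMulVec, trace_vecMulVec] at this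
      change ⟪x, x⟫_ℂ = ⟪y, y⟫_ℂ at this
      rw [inner_self_eq_norm_sq_to_K, inner_self_eq_norm_sq_to_K] at this
      exact (sq_eq_sq₀ (norm_nonneg _) (norm_nonneg _)).1 (by exact_mod_cast this)
    by_cases hx : x = 0
    · refine ⟨1, norm_one, ?_⟩
      rw [hx, norm_zero, eq_comm, norm_eq_zero] at hnorm
      rw [hx, hnorm, one_smul]
    have hxb : x = (⟪y, x⟫_ℂ / ⟪x, x⟫_ℂ) • y := by
      rw [div_eq_inv_mul, mul_smul, ← hvec, inv_smul_smul₀ (inner_self_ne_zero.2 hx)]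
    refine ⟨_, ?_, hxb⟩
    have := congrArg norm hxb
    rw [norm_smul, ← hnorm] at this
    exact (mul_eq_right₀ (norm_ne_zero_iff.2 hx)).1 this.symm
  · rintro ⟨b, hb, rfl⟩
    have hb' : b * conj b = 1 := by
      rw [RCLike.mul_conj, hb]; simp
    ext k l
    simp only [outerDiff_apply, PiLp.smul_apply, smul_eq_mul, map_mul, Matrix.zero_apply]
    linear_combination (y k * conj (y l)) * hb'

lemma norm_outerDiff_sq (x y : EuclideanSpace ℂ n) :
    ‖outerDiff x y‖ ^ 2 = ‖x‖ ^ 4 + ‖y‖ ^ 4 - 2 * ‖⟪x, y⟫_ℂ‖ ^ 2 := by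
  rw [frobenius_norm_sq_eq_re_trace, (isHermitian_outerDiff x y).eq]
  have hl (u v : EuclideanSpace ℂ n) : star u.ofLp ⬝ᵥ v.ofLp = ⟪u, v⟫_ℂ := dotProduct_comm _ _
  have hr (u v : EuclideanSpace ℂ n) : u.ofLp ⬝ᵥ star v.ofLp = ⟪v, u⟫_ℂ := rfl
  simp only [outerDiff, Matrix.mul_sub, Matrix.sub_mul, vecMulVec_mul_vecMulVec, trace_sub,
    trace_vecMulVec, dotProduct_smul, smul_eq_mul, hl, hr, inner_self_eq_norm_sq_to_K]
  rw [← inner_conj_symm y x, RCLike.conj_mul, RCLike.mul_conj]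
  norm_cast
  ring

lemma two_mul_norm_inner_lt_of_outerDiff_ne_zero {x y : EuclideanSpace ℂ n}
    (h : outerDiff x y ≠ 0) : 2 * ‖⟪x, y⟫_ℂ‖ < ‖x‖ ^ 2 + ‖y‖ ^ 2 := by
  have hpos : 0 < ‖outerDiff x y‖ ^ 2 := by positivity
  rw [norm_outerDiff_sq] at hpos
  nlinarith [norm_inner_le_norm (𝕜 := ℂ) x y, norm_nonneg ⟪x, y⟫_ℂ, norm_nonneg x, norm_nonneg y]

lemma exists_inner_eq_zero_outerDiff_eq {x y : EuclideanSpace ℂ n}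
    (h : 2 * ‖⟪x, y⟫_ℂ‖ < ‖x‖ ^ 2 + ‖y‖ ^ 2) :
    ∃ x' y' : EuclideanSpace ℂ n, ⟪x', y'⟫_ℂ = 0 ∧ outerDiff x' y' = outerDiff x y := by
  obtain ⟨c, s, hcs, hcsr⟩ := exists_hyperbolic_cos_sin (norm_nonneg _) h
  obtain ⟨φ, hφ, hφz⟩ := Complex.exists_norm_eq_mul_self ⟪x, y⟫_ℂ
  have hφφ : φ * conj φ = 1 := by
    rw [RCLike.mul_conj, hφ]; simp
  refine ⟨(c : ℂ) • x + ((s : ℂ) * φ) • y, (s : ℂ) • x + ((c : ℂ) * φ) • y, ?_, ?_⟩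
  · have hcsrC : (c : ℂ) * s * (‖x‖ ^ 2 + ‖y‖ ^ 2) + ((c : ℂ) ^ 2 + (s : ℂ) ^ 2) * ‖⟪x, y⟫_ℂ‖
        = 0 := by
      exact_mod_cast hcsr
    have hφz' : (‖⟪x, y⟫_ℂ‖ : ℂ) = conj φ * conj ⟪x, y⟫_ℂ := by
      rw [← map_mul, ← hφz, Complex.conj_ofReal]
    simp only [inner_add_left, inner_add_right, inner_smul_left, inner_smul_right, map_mul,
      Complex.conj_ofReal, inner_self_eq_norm_sq_to_K]
    rw [← inner_conj_symm y x]
    linear_combination hcsrC - (c : ℂ) ^ 2 * hφz - (s : ℂ) ^ 2 * hφz'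
      + (s * c * ‖y‖ ^ 2 : ℂ) * hφφ
  · have hcsC : (c : ℂ) ^ 2 - (s : ℂ) ^ 2 = 1 := by exact_mod_cast hcs
    ext k l
    simp only [outerDiff_apply, PiLp.add_apply, PiLp.smul_apply, smul_eq_mul, map_add, map_mul,
      Complex.conj_ofReal]
    linear_combination (x k * conj (x l) - φ * conj φ * (y k * conj (y l))) * hcsC
      - (y k * conj (y l)) * hφφ

variable (n) in
def normalizedOrthogonalPairs : Set (EuclideanSpace ℂ n × EuclideanSpace ℂ n) :=
  {p | ⟪p.1, p.2⟫_ℂ = 0 ∧ ‖outerDiff p.1 p.2‖ = 1}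

lemma exists_mem_normalizedOrthogonalPairs {x y : EuclideanSpace ℂ n}
    (h : outerDiff x y ≠ 0) : ∃ p ∈ normalizedOrthogonalPairs n,
      outerDiff p.1 p.2 = ‖outerDiff x y‖⁻¹ • outerDiff x y := by
  obtain ⟨x', y', hxy', hQ'⟩ :=
    exists_inner_eq_zero_outerDiff_eq (two_mul_norm_inner_lt_of_outerDiff_ne_zero h)
  set t := √‖outerDiff x y‖⁻¹
  have hQ : outerDiff ((t : ℂ) • x') ((t : ℂ) • y') = ‖outerDiff x y‖⁻¹ • outerDiff x y := by
    rw [outerDiff_real_smul, sq_sqrt (by positivity), hQ']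
  refine ⟨((t : ℂ) • x', (t : ℂ) • y'), ⟨?_, ?_⟩, hQ⟩
  · simp [hxy']
  · rw [hQ, norm_smul, norm_inv, norm_norm, inv_mul_cancel₀ (norm_ne_zero_iff.2 h)]

lemma isCompact_normalizedOrthogonalPairs : IsCompact (normalizedOrthogonalPairs n) := by
  refine Metric.isCompact_of_isClosed_isBounded ?_ ?_
  · exact (isClosed_eq (by fun_prop) continuous_const).inter
      (isClosed_eq continuous_outerDiff.norm continuous_const)
  · refine (Metric.isBounded_closedBall (x := 0) (r := 1)).subset ?_
    rintro ⟨x, y⟩ ⟨hxy, hQ⟩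
    have h := norm_outerDiff_sq x y
    rw [hQ, hxy, norm_zero] at h
    have hx : ‖x‖ ≤ 1 := (pow_le_one_iff_of_nonneg (norm_nonneg x) four_ne_zero).1
      (by nlinarith [pow_nonneg (norm_nonneg y) 4])
    have hy : ‖y‖ ≤ 1 := (pow_le_one_iff_of_nonneg (norm_nonneg y) four_ne_zero).1
      (by nlinarith [pow_nonneg (norm_nonneg x) 4])
    simpa [Prod.norm_def] using And.intro hx hy

lemma exists_pos_le_sum_norm_trace_mul_outerDiff {ι : Type*} [Fintype ι]
    {A : ι → Matrix n n ℂ}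
    (hA : ∀ x y, (∀ j, trace (A j * outerDiff x y) = 0) → outerDiff x y = 0) :
    ∃ c > (0 : ℝ), ∀ p ∈ normalizedOrthogonalPairs n,
      c ≤ ∑ j, ‖trace (A j * outerDiff p.1 p.2)‖ := by
  rcases (normalizedOrthogonalPairs n).eq_empty_or_nonempty with hK | hK
  · exact ⟨1, one_pos, by simp [hK]⟩
  have hcont : Continuous fun p : EuclideanSpace ℂ n × EuclideanSpace ℂ n =>
      ∑ j, ‖trace (A j * outerDiff p.1 p.2)‖ := by
    have := continuous_outerDiff (n := n)
    fun_prop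
  obtain ⟨p, hp, hmin⟩ := isCompact_normalizedOrthogonalPairs.exists_isMinOn hK hcont.continuousOn
  refine ⟨_, lt_of_le_of_ne (by positivity) fun h0 => ?_, fun q hq => hmin hq⟩
  have hzero : ∀ j, trace (A j * outerDiff p.1 p.2) = 0 := fun j =>
    norm_eq_zero.1 ((Finset.sum_eq_zero_iff_of_nonneg fun _ _ => norm_nonneg _).1 h0.symm j
      (Finset.mem_univ j))
  have h1 := hp.2
  rw [hA _ _ hzero, norm_zero] at h1
  exact zero_ne_one h1

lemma frobNorm_eq_norm {d : ℕ} (M : Matrix (Fin d) (Fin d) ℂ) : frobNorm M = ‖M‖ :=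
  (frobenius_norm_eq_sqrt M).symm

lemma phaseRetrievableC_iff {d N : ℕ} (A : Fin N → Matrix (Fin d) (Fin d) ℂ) :
    PhaseRetrievableC A ↔ ∀ x y : EuclideanSpace ℂ (Fin d),
      (∀ j, trace (A j * outerDiff x y) = 0) → outerDiff x y = 0 := by
  simp only [PhaseRetrievableC, trace_mul_outerDiff, sub_eq_zero, outerDiff_eq_zero_iff]
  constructor
  · intro h x y hxy
    obtain ⟨b, hb, hx⟩ := h x.ofLp y.ofLp hxy
    exact ⟨b, hb, WithLp.ofLp_injective 2 hx⟩
  · intro h x y hxy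
    obtain ⟨b, hb, hx⟩ := h (WithLp.toLp 2 x) (WithLp.toLp 2 y) hxy
    exact ⟨b, hb, congrArg WithLp.ofLp hx⟩

end PhaseRetrieval

open PhaseRetrieval

theorem stmt_6_general (d N : ℕ)
    (A : Fin N → Matrix (Fin d) (Fin d) ℂ)
    (hPR : PhaseRetrievableC A) :
    ∃ ε > (0 : ℝ), ∀ B : Fin N → Matrix (Fin d) (Fin d) ℂ,
      (∀ j, (B j).IsHermitian) → (∀ j, frobNorm (B j - A j) < ε) →
      PhaseRetrievableC B := by
  obtain ⟨c, hc, hcA⟩ :=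
    exists_pos_le_sum_norm_trace_mul_outerDiff ((phaseRetrievableC_iff A).1 hPR)
  refine ⟨c / (N + 1), by positivity, fun B _ hBA => (phaseRetrievableC_iff B).2 fun x y hB => ?_⟩
  by_contra hQ
  obtain ⟨p, hp, hpQ⟩ := exists_mem_normalizedOrthogonalPairs hQ
  have hclose (j : Fin N) : ‖trace (A j * outerDiff p.1 p.2)‖ ≤ c / (N + 1) := by
    have hBp : trace (B j * outerDiff p.1 p.2) = 0 := by
      rw [hpQ, Matrix.mul_smul, trace_smul, hB j, smul_zero]
    calc ‖trace (A j * outerDiff p.1 p.2)‖ = ‖trace ((B j - A j) * outerDiff p.1 p.2)‖ := by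
          rw [Matrix.sub_mul, trace_sub, hBp, zero_sub, norm_neg]
      _ ≤ ‖B j - A j‖ * ‖outerDiff p.1 p.2‖ := norm_trace_mul_le _ _
      _ ≤ c / (N + 1) := by rw [hp.2, mul_one, ← frobNorm_eq_norm]; exact (hBA j).le
  have hsum : ∑ _j : Fin N, c / (N + 1) < c := by
    rw [Finset.sum_const, Finset.card_univ, Fintype.card_fin, nsmul_eq_mul, mul_div_assoc',
      div_lt_iff₀ (by positivity)]
    linarith
  exact (hcA p hp).trans (Finset.sum_le_sum fun j _ => hclose j) |>.not_gt hsum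

theorem stmt_6 (d N : ℕ) (hd : 1 ≤ d) (hN : 1 ≤ N)
    (A : Fin N → Matrix (Fin d) (Fin d) ℂ)
    (hA : ∀ j, (A j).IsHermitian) (hPR : PhaseRetrievableC A) :
    ∃ ε > (0 : ℝ), ∀ B : Fin N → Matrix (Fin d) (Fin d) ℂ,
      (∀ j, (B j).IsHermitian) → (∀ j, frobNorm (B j - A j) < ε) →
      PhaseRetrievableC B :=
  stmt_6_general d N A hPR
end

section
/- Let p, q ≥ 1 and N ≤ p + q − 2. Then for any complex matrices B_1, …, B_N ∈ ℂ^{p×q} there exist nonzero vectors x ∈ ℂ^p and y ∈ ℂ^q such that xᵀB_jy = 0 for all 1 ≤ j ≤ N. That is, no complex bilinear form of size (p, q, N) with N ≤ p + q − 2 is nonsingular. -/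
/-!
If the forms `xᵀ B_j y` had no common zero with `x ≠ 0` and `y ≠ 0`, the Nullstellensatz would
put a power `(x_i y_l)^m` of every mixed product into the ideal `I` spanned by the bilinear
polynomials `F_j`; by pigeonhole, `I` then contains every polynomial of bidegree `(d, d)` for all
`d ≥ D`. Splitting off one `F_j` at a time, the bidegree `(D + k, D + k)` part lies in
`span(F_j)^k` times the bidegree `(D, D)` part, and `span(F_j)^k` is the image of the degree `k`
forms in `N` variables, so its dimension is `O(k^(N-1))`. The bidegree `(d, d)` part has dimension
of order `d^(p+q-2)`, which is impossible when `N - 1 < p + q - 2`.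
-/

open MvPolynomial Module Function Matrix

theorem Nat.not_forall_pow_le_mul_pow {n m : ℕ} (h : n < m) (A : ℕ) :
    ¬ ∀ t : ℕ, (t + 1) ^ m ≤ A * (t + 1) ^ n := by
  intro hA
  have hpow : (A + 1) ^ (n + 1) ≤ (A + 1) ^ m := Nat.pow_le_pow_right (by omega) h
  have := hA A
  rw [pow_succ] at hpow
  nlinarith [pow_pos (Nat.succ_pos A) n]

theorem Fin.exists_injective_sum_eq {n t d : ℕ} (h : n * t ≤ d) :
    ∃ f : (Fin n → Fin (t + 1)) → Fin (n + 1) → ℕ, Injective f ∧ ∀ a, ∑ i, f a i = d := by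
  refine ⟨fun a => Fin.snoc (fun i => (a i : ℕ)) (d - ∑ i, (a i : ℕ)), fun a b hab => ?_,
    fun a => ?_⟩
  · funext i
    exact Fin.ext (by simpa using congrFun hab i.castSucc)
  · have : ∑ i, (a i : ℕ) ≤ n * t := by
      simpa using Finset.sum_le_sum fun i (_ : i ∈ Finset.univ) => Fin.is_le (a i)
    simp only [Fin.sum_univ_castSucc, Fin.snoc_castSucc, Fin.snoc_last]
    omega

theorem Finsupp.card_degree_eq_le (n k : ℕ) :
    Nat.card {c : Fin (n + 1) →₀ ℕ // c.degree = k} ≤ (k + 1) ^ n := by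
  let restrict (c : {c : Fin (n + 1) →₀ ℕ // c.degree = k}) : Fin n → Fin (k + 1) :=
    fun i => ⟨c.1 i.castSucc, Nat.lt_succ_of_le ((le_degree _ c.1).trans_eq c.2)⟩
  have hinj : Injective restrict := by
    intro c c' h
    have hcast (i : Fin n) : c.1 i.castSucc = c'.1 i.castSucc := congrArg Fin.val (congrFun h i)
    have hlast : c.1 (Fin.last n) = c'.1 (Fin.last n) := by
      have hc := c.2
      have hc' := c'.2
      rw [degree_eq_sum, Fin.sum_univ_castSucc] at hc hc'
      simp only [hcast] at hc
      omega
    exact Subtype.ext (Finsupp.ext fun i => Fin.lastCases hlast hcast i)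
  simpa using Nat.card_le_card_of_injective restrict hinj

theorem Submodule.finrank_mul_le {K A : Type*} [Field K] [Ring A] [Algebra K A]
    (P Q : Submodule K A) [FiniteDimensional K P] [FiniteDimensional K Q] :
    finrank K ↥(P * Q) ≤ finrank K P * finrank K Q := by
  let bP := finBasis K P
  let bQ := finBasis K Q
  let prods (ij : Fin (finrank K P) × Fin (finrank K Q)) : A := bP ij.1 * bQ ij.2
  have hle : P * Q ≤ span K (Set.range prods) := by
    refine Submodule.mul_le.mpr fun a ha b hb => ?_
    have ha' := congrArg Subtype.val (bP.sum_repr ⟨a, ha⟩)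
    have hb' := congrArg Subtype.val (bQ.sum_repr ⟨b, hb⟩)
    simp only [Submodule.coe_sum, Submodule.coe_smul] at ha' hb'
    rw [← ha', ← hb', Finset.sum_mul_sum]
    simp only [smul_mul_smul_comm]
    exact Submodule.sum_mem _ fun i _ => Submodule.sum_mem _ fun j _ =>
      Submodule.smul_mem _ _ (Submodule.subset_span ⟨(i, j), rfl⟩)
  have := FiniteDimensional.span_of_finite K (Set.finite_range prods)
  calc finrank K ↥(P * Q) ≤ finrank K ↥(span K (Set.range prods)) := Submodule.finrank_mono hle
    _ ≤ _ := finrank_range_le_card _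
    _ = _ := by simp

namespace MvPolynomial

section Graded

variable {σ M K : Type*} [Field K]

theorem finrank_weightedHomogeneousSubmodule [AddCommMonoid M] (w : σ → M) (m : M) :
    finrank K (weightedHomogeneousSubmodule K w m) =
      Nat.card {d : σ →₀ ℕ // Finsupp.weight w d = m} := by
  rw [weightedHomogeneousSubmodule_eq_finsupp_supported,
    (AddMonoidAlgebra.supportedEquivFinsupp _).finrank_eq, finrank, rank_finsupp_self,
    Cardinal.toNat_lift]
  rfl

theorem card_le_finrank_weightedHomogeneousSubmodule {ι : Type*} [AddCommMonoid M] [Fintype ι]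
    {w : σ → M} {m : M} [FiniteDimensional K (weightedHomogeneousSubmodule K w m)]
    {e : ι → σ →₀ ℕ} (he : Injective e) (hw : ∀ i, Finsupp.weight w (e i) = m) :
    Fintype.card ι ≤ finrank K (weightedHomogeneousSubmodule K w m) := by
  let v (i : ι) : weightedHomogeneousSubmodule K w m :=
    ⟨monomial (e i) 1, isWeightedHomogeneous_monomial _ _ _ (hw i)⟩
  have hli : LinearIndependent K v := by
    have hv : Submodule.subtype _ ∘ v = basisMonomials σ K ∘ e := by
      ext1 i
      simp [v, coe_basisMonomials]
    have := (basisMonomials σ K).linearIndependent.comp e he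
    rw [← hv] at this
    exact this.of_comp
  exact hli.fintype_card_le_finrank

variable (K) in
theorem finrank_homogeneousSubmodule_le (n k : ℕ) :
    finrank K (homogeneousSubmodule (Fin (n + 1)) K k) ≤ (k + 1) ^ n := by
  rw [← weightedHomogeneousSubmodule_one, finrank_weightedHomogeneousSubmodule]
  have := Finsupp.card_degree_eq_le n k
  rwa [Finsupp.degree_eq_weight_one] at this

theorem finrank_span_range_pow_le {ι A : Type*} [Finite ι] [CommRing A] [Algebra K A]
    (F : ι → A) (k : ℕ) :
    finrank K ↥(Submodule.span K (Set.range F) ^ k) ≤ finrank K (homogeneousSubmodule ι K k) := by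
  have hspan : Submodule.span K (Set.range F) =
      (homogeneousSubmodule ι K 1).map (aeval F).toLinearMap := by
    rw [homogeneousSubmodule_one_eq_span_X, Submodule.map_span, ← Set.range_comp]
    simp [Function.comp_def]
  rw [hspan, ← Submodule.map_pow, homogeneousSubmodule_one_pow]
  have : Module.Finite K (homogeneousSubmodule ι K k) := .of_fg (homogeneousSubmodule_fg ι K k)
  exact Submodule.finrank_map_le _ _

theorem finrank_le_of_le_span_pow_mul {n k : ℕ} {A : Type*} [CommRing A] [Algebra K A]
    {F : Fin (n + 1) → A} {V W : Submodule K A} [FiniteDimensional K V]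
    (hW : W ≤ Submodule.span K (Set.range F) ^ k * V) :
    finrank K W ≤ (k + 1) ^ n * finrank K V := by
  have hpow : (Submodule.span K (Set.range F) ^ k).FG :=
    (Submodule.fg_span (Set.finite_range F)).pow k
  have : FiniteDimensional K ↥(Submodule.span K (Set.range F) ^ k) := .of_fg hpow
  have : FiniteDimensional K ↥(Submodule.span K (Set.range F) ^ k * V) :=
    .of_fg (hpow.mul (Module.Finite.iff_fg.mp inferInstance))
  calc finrank K W ≤ finrank K ↥(Submodule.span K (Set.range F) ^ k * V) :=
        Submodule.finrank_mono hW
    _ ≤ finrank K ↥(Submodule.span K (Set.range F) ^ k) * finrank K V :=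
        Submodule.finrank_mul_le _ _
    _ ≤ (k + 1) ^ n * finrank K V := by
        gcongr
        exact (finrank_span_range_pow_le F k).trans (finrank_homogeneousSubmodule_le K n k)

end Graded

section GradedIdeal

variable {σ R M : Type*} [CommSemiring R] [AddCancelCommMonoid M]

attribute [local instance] weightedGradedAlgebra in
theorem weightedHomogeneousComponent_mul_of_right [DecidableEq M] {w : σ → M} {m n : M}
    (c : MvPolynomial σ R) {f : MvPolynomial σ R} (hf : f.IsWeightedHomogeneous w n) :
    weightedHomogeneousComponent w (m + n) (c * f) = weightedHomogeneousComponent w m c * f := by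
  rw [← weightedDecomposition.decompose'_apply, ← weightedDecomposition.decompose'_apply]
  exact DirectSum.coe_decompose_mul_add_of_right_mem (weightedHomogeneousSubmodule R w) hf

theorem mem_span_mul_weightedHomogeneousSubmodule {ι : Type*} [Fintype ι]
    {F : ι → MvPolynomial σ R} {w : σ → M} {m n : M}
    (hF : ∀ j, (F j).IsWeightedHomogeneous w n) {φ : MvPolynomial σ R}
    (hφI : φ ∈ Ideal.span (Set.range F)) (hφ : φ.IsWeightedHomogeneous w (m + n)) :
    φ ∈ Submodule.span R (Set.range F) * weightedHomogeneousSubmodule R w m := by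
  classical
  obtain ⟨c, rfl⟩ := Ideal.mem_span_range_iff_exists_fun.mp hφI
  rw [← hφ.weightedHomogeneousComponent_same, map_sum]
  refine Submodule.sum_mem _ fun j _ => ?_
  rw [weightedHomogeneousComponent_mul_of_right _ (hF j), mul_comm _ (F j)]
  exact Submodule.mul_mem_mul (Submodule.subset_span (Set.mem_range_self j))
    (weightedHomogeneousComponent_isWeightedHomogeneous _ _)

theorem weightedHomogeneousSubmodule_le_span_pow_mul {ι : Type*} [Fintype ι]
    {F : ι → MvPolynomial σ R} {w : σ → M} {n D : M}
    (hF : ∀ j, (F j).IsWeightedHomogeneous w n)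
    (hI : ∀ k : ℕ, ∀ φ : MvPolynomial σ R, φ.IsWeightedHomogeneous w (D + (k + 1) • n) →
      φ ∈ Ideal.span (Set.range F)) (k : ℕ) :
    weightedHomogeneousSubmodule R w (D + k • n) ≤
      Submodule.span R (Set.range F) ^ k * weightedHomogeneousSubmodule R w D := by
  induction k with
  | zero => simp
  | succ k ih =>
    intro φ hφ
    have hφ' : φ.IsWeightedHomogeneous w (D + k • n + n) := by
      rwa [add_assoc, ← succ_nsmul]
    rw [pow_succ', mul_assoc]
    exact mul_le_mul_right ih _
      (mem_span_mul_weightedHomogeneousSubmodule hF (hI k φ hφ) hφ')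

end GradedIdeal

section Bidegree

def bidegree (ι κ : Type*) : ι ⊕ κ → ℕ × ℕ := Sum.elim (fun _ => (1, 0)) (fun _ => (0, 1))

variable {ι κ : Type*} [Fintype ι] [Fintype κ]

theorem weight_bidegree (e : ι ⊕ κ →₀ ℕ) :
    Finsupp.weight (bidegree ι κ) e = (∑ i, e (.inl i), ∑ l, e (.inr l)) := by
  simp [Finsupp.weight_apply, Finsupp.sum_fintype, Fintype.sum_sum_type, bidegree, Prod.ext_iff,
    Prod.fst_sum, Prod.snd_sum]

theorem weightedHomogeneousSubmodule_bidegree_le (R : Type*) [CommSemiring R] (a b : ℕ) :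
    weightedHomogeneousSubmodule R (bidegree ι κ) (a, b) ≤
      homogeneousSubmodule (ι ⊕ κ) R (a + b) := by
  intro φ hφ e he
  have hab := hφ he
  rw [weight_bidegree, Prod.mk.injEq] at hab
  change Finsupp.weight (fun _ => 1) e = a + b
  rw [← Finsupp.degree_eq_weight_one, Finsupp.degree_eq_sum, Fintype.sum_sum_type, hab.1, hab.2]

instance (K : Type*) [Field K] (a b : ℕ) :
    FiniteDimensional K (weightedHomogeneousSubmodule K (bidegree ι κ) (a, b)) :=
  have : FiniteDimensional K (homogeneousSubmodule (ι ⊕ κ) K (a + b)) :=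
    .of_fg (homogeneousSubmodule_fg _ K _)
  Submodule.finiteDimensional_of_le (weightedHomogeneousSubmodule_bidegree_le K a b)

theorem pow_add_le_finrank_bidegree (K : Type*) [Field K] {p q t d : ℕ} (hp : p * t ≤ d)
    (hq : q * t ≤ d) :
    (t + 1) ^ (p + q) ≤
      finrank K (weightedHomogeneousSubmodule K (bidegree (Fin (p + 1)) (Fin (q + 1))) (d, d)) := by
  obtain ⟨f, hf, hfd⟩ := Fin.exists_injective_sum_eq hp
  obtain ⟨g, hg, hgd⟩ := Fin.exists_injective_sum_eq hq
  let e (ab : (Fin p → Fin (t + 1)) × (Fin q → Fin (t + 1))) : Fin (p + 1) ⊕ Fin (q + 1) →₀ ℕ :=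
    Finsupp.equivFunOnFinite.symm (Sum.elim (f ab.1) (g ab.2))
  have he : Injective e := by
    intro ab ab' h
    have h' := Finsupp.equivFunOnFinite.symm.injective h
    exact Prod.ext (hf (congrArg (· ∘ Sum.inl) h')) (hg (congrArg (· ∘ Sum.inr) h'))
  calc (t + 1) ^ (p + q) = Fintype.card ((Fin p → Fin (t + 1)) × (Fin q → Fin (t + 1))) := by
        simp [pow_add]
    _ ≤ _ := card_le_finrank_weightedHomogeneousSubmodule he fun ab => by
        simp [e, weight_bidegree, hfd, hgd]

theorem mem_of_isWeightedHomogeneous_bidegree {R : Type*} [CommSemiring R] [Nonempty ι]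
    [Nonempty κ] {I : Ideal (MvPolynomial (ι ⊕ κ) R)} {m d : ℕ}
    (hX : ∀ i l, (X (.inl i) * X (.inr l)) ^ m ∈ I) (hι : Fintype.card ι * m ≤ d)
    (hκ : Fintype.card κ * m ≤ d) {φ : MvPolynomial (ι ⊕ κ) R}
    (hφ : φ.IsWeightedHomogeneous (bidegree ι κ) (d, d)) : φ ∈ I := by
  classical
  rw [← φ.support_sum_monomial_coeff]
  refine Ideal.sum_mem _ fun e he => ?_
  have hed := hφ (mem_support_iff.mp he)
  rw [weight_bidegree, Prod.mk.injEq] at hed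
  obtain ⟨i, -, hi⟩ := Finset.exists_le_of_sum_le (f := fun _ => m) (g := fun i => e (.inl i))
    Finset.univ_nonempty (by simpa [hed.1] using hι)
  obtain ⟨l, -, hl⟩ := Finset.exists_le_of_sum_le (f := fun _ => m) (g := fun l => e (.inr l))
    Finset.univ_nonempty (by simpa [hed.2] using hκ)
  refine I.mem_of_dvd ?_ (hX i l)
  rw [mul_pow, X_pow_eq_monomial, X_pow_eq_monomial, monomial_mul, one_mul,
    monomial_dvd_monomial]
  refine ⟨.inr fun s => ?_, one_dvd _⟩
  rcases s with s | s <;> simp only [Finsupp.coe_add, Pi.add_apply, Finsupp.single_apply,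
    Sum.inl.injEq, Sum.inr.injEq, reduceCtorEq, if_false] <;> split_ifs <;> subst_vars <;> omega

end Bidegree

section Bilinear

variable {ι κ : Type*} [Fintype ι] [Fintype κ]

noncomputable def bilinPoly {R : Type*} [CommSemiring R] (B : Matrix ι κ R) :
    MvPolynomial (ι ⊕ κ) R :=
  ∑ i, ∑ l, C (B i l) * X (.inl i) * X (.inr l)

theorem isWeightedHomogeneous_bilinPoly {R : Type*} [CommSemiring R] (B : Matrix ι κ R) :
    (bilinPoly B).IsWeightedHomogeneous (bidegree ι κ) (1, 1) := by
  refine IsWeightedHomogeneous.sum _ _ _ fun i _ => IsWeightedHomogeneous.sum _ _ _ fun l _ => ?_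
  convert ((isWeightedHomogeneous_C _ (B i l)).mul (isWeightedHomogeneous_X R _ (Sum.inl i))).mul
    (isWeightedHomogeneous_X R _ (Sum.inr l)) using 1
  simp [bidegree]

theorem eval_bilinPoly {R : Type*} [CommSemiring R] (B : Matrix ι κ R) (z : ι ⊕ κ → R) :
    eval z (bilinPoly B) = (z ∘ .inl) ⬝ᵥ B *ᵥ (z ∘ .inr) := by
  simp only [bilinPoly, map_sum, map_mul, eval_C, eval_X, dotProduct, mulVec, Finset.mul_sum,
    Function.comp]
  exact Finset.sum_congr rfl fun i _ => Finset.sum_congr rfl fun l _ => by ring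

theorem exists_pow_mem_span_bilinPoly {K J : Type*} [Field K] [IsAlgClosed K]
    (B : J → Matrix ι κ K) (hB : ∀ x y, (∀ j, x ⬝ᵥ B j *ᵥ y = 0) → x = 0 ∨ y = 0) :
    ∃ m, ∀ i l,
      (X (.inl i) * X (.inr l)) ^ m ∈ Ideal.span (Set.range fun j => bilinPoly (B j)) := by
  have hrad (i : ι) (l : κ) :
      X (.inl i) * X (.inr l) ∈ (Ideal.span (Set.range fun j => bilinPoly (B j))).radical := by
    rw [← vanishingIdeal_zeroLocus_eq_radical (K := K), mem_vanishingIdeal_iff]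
    intro z hz
    have hzero (j : J) : (z ∘ .inl) ⬝ᵥ B j *ᵥ (z ∘ .inr) = 0 := by
      rw [← eval_bilinPoly]
      exact mem_zeroLocus_iff.mp hz _ (Ideal.subset_span ⟨j, rfl⟩)
    rcases hB _ _ hzero with h | h
    · simpa using .inl (congrFun h i)
    · simpa using .inr (congrFun h l)
  choose n hn using hrad
  exact ⟨Finset.univ.sup fun il : ι × κ => n il.1 il.2, fun i l => Ideal.pow_mem_of_pow_mem _
    (hn i l) (Finset.le_sup (f := fun il : ι × κ => n il.1 il.2) (Finset.mem_univ (i, l)))⟩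

end Bilinear

end MvPolynomial

theorem exists_ne_zero_forall_dotProduct_mulVec_eq_zero {K : Type*} [Field K] [IsAlgClosed K]
    {p q N : ℕ} (hN : N < p + q) (B : Fin (N + 1) → Matrix (Fin (p + 1)) (Fin (q + 1)) K) :
    ∃ x ≠ 0, ∃ y ≠ 0, ∀ j, x ⬝ᵥ B j *ᵥ y = 0 := by
  by_contra! hB
  let V (d : ℕ) := weightedHomogeneousSubmodule K (bidegree (Fin (p + 1)) (Fin (q + 1))) (d, d)
  obtain ⟨m, hm⟩ := exists_pow_mem_span_bilinPoly B fun x y h => by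
    by_contra! hxy
    obtain ⟨j, hj⟩ := hB x hxy.1 y hxy.2
    exact hj (h j)
  set D := m * (p + q + 2) with hD
  have hV (k : ℕ) :
      V (D + k) ≤ Submodule.span K (Set.range fun j => bilinPoly (B j)) ^ k * V D := by
    simpa using weightedHomogeneousSubmodule_le_span_pow_mul (D := (D, D))
      (fun j => isWeightedHomogeneous_bilinPoly (B j))
      (fun k φ hφ => mem_of_isWeightedHomogeneous_bidegree hm (d := D + (k + 1))
        (by simp; nlinarith) (by simp; nlinarith) (by simpa using hφ)) k
  refine Nat.not_forall_pow_le_mul_pow hN ((p + q + 1) ^ N * finrank K (V D)) fun t => ?_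
  set k := (p + q) * t with hk
  calc (t + 1) ^ (p + q) ≤ finrank K (V (D + k)) :=
        pow_add_le_finrank_bidegree K (by nlinarith) (by nlinarith)
    _ ≤ (k + 1) ^ N * finrank K (V D) := finrank_le_of_le_span_pow_mul (hV k)
    _ ≤ ((p + q + 1) * (t + 1)) ^ N * finrank K (V D) := by
        gcongr
        nlinarith
    _ = _ := by rw [mul_pow]; ring

theorem stmt_8 (p q N : ℕ) (hp : 1 ≤ p) (hq : 1 ≤ q) (hN : N ≤ p + q - 2)
    (B : Fin N → Matrix (Fin p) (Fin q) ℂ) :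
    ∃ x : Fin p → ℂ, x ≠ 0 ∧ ∃ y : Fin q → ℂ, y ≠ 0 ∧
      ∀ j, x ⬝ᵥ (B j) *ᵥ y = 0 := by
  obtain ⟨p, rfl⟩ := Nat.exists_eq_add_of_le' hp
  obtain ⟨q, rfl⟩ := Nat.exists_eq_add_of_le' hq
  rcases N with _ | N
  · exact ⟨1, one_ne_zero, 1, one_ne_zero, fun j => j.elim0⟩
  · exact exists_ne_zero_forall_dotProduct_mulVec_eq_zero (by omega) B
end

section
/- For every odd d ≥ 1 there exists a tuple (A_1, …, A_N) of N = 2d − 1 real symmetric d×d matrices having the phase retrieval property on ℝ^d, and for every even d ≥ 2 there exists such a tuple with N = 2d − 2 matrices. In other words, 𝔪_ℝ(d) ≤ 2d − 1 for odd d and 𝔪_ℝ(d) ≤ 2d − 2 for even d. -/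
open Matrix

namespace PRAux

open Polynomial Finset Complex

noncomputable section

/-- Extend a `Fin d`-vector to `ℕ` by zero. -/
def prExt {d : ℕ} (x : Fin d → ℝ) : ℕ → ℝ := fun n => if h : n < d then x ⟨n, h⟩ else 0

lemma prExt_coe {d : ℕ} (x : Fin d → ℝ) (a : Fin d) : prExt x (a : ℕ) = x a := by
  simp [prExt, a.isLt]

lemma prSumDouble {M : Type*} [AddCommMonoid M] (m : ℕ) (g : ℕ → M) :
    ∑ a ∈ Finset.range (2 * m), g a
      = ∑ k ∈ Finset.range m, (g (2 * k) + g (2 * k + 1)) := by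
  induction m with
  | zero => simp
  | succ n ih =>
      rw [show 2 * (n + 1) = (2 * n + 1) + 1 by ring, Finset.sum_range_succ,
        Finset.sum_range_succ, ih, Finset.sum_range_succ, add_assoc]

/-- The real polynomial with coefficients `x'`. -/
def prPolyR (d : ℕ) (x' : ℕ → ℝ) : Polynomial ℝ :=
  ∑ k ∈ Finset.range d, C (x' k) * X ^ k

lemma prPolyR_coeff (d : ℕ) (x' : ℕ → ℝ) (n : ℕ) :
    (prPolyR d x').coeff n = if n ∈ Finset.range d then x' n else 0 := by
  simp [prPolyR, finset_sum_coeff, coeff_C_mul, coeff_X_pow, Finset.sum_ite_eq]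

lemma prPolyR_natDegree (d : ℕ) (x' : ℕ → ℝ) (hd : 1 ≤ d) :
    (prPolyR d x').natDegree ≤ d - 1 := by
  refine natDegree_sum_le_of_forall_le _ _ fun k hk => ?_
  exact (natDegree_C_mul_X_pow_le _ _).trans (by have := Finset.mem_range.mp hk; omega)

lemma prPolyR_eval {d : ℕ} (x : Fin d → ℝ) (t : ℝ) :
    (prPolyR d (prExt x)).eval t = ∑ a : Fin d, x a * t ^ (a : ℕ) := by
  rw [prPolyR, eval_finset_sum]
  rw [← Fin.sum_univ_eq_sum_range (fun n => eval t (C (prExt x n) * X ^ n)) d]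
  exact Finset.sum_congr rfl fun a _ => by simp [prExt_coe]

lemma prQuadR {d : ℕ} (x : Fin d → ℝ) (t : ℝ) :
    x ⬝ᵥ (Matrix.of fun a b : Fin d => t ^ ((a : ℕ) + (b : ℕ))) *ᵥ x
      = ((prPolyR d (prExt x)).eval t) ^ 2 := by
  rw [prPolyR_eval, sq, Finset.sum_mul_sum]
  simp only [dotProduct, Matrix.mulVec, Matrix.of_apply, Finset.mul_sum]
  exact Finset.sum_congr rfl fun a _ => Finset.sum_congr rfl fun b _ => by ring

/-- The complex polynomial pairing consecutive coordinates. -/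
def prPolyC (m : ℕ) (x' : ℕ → ℝ) : Polynomial ℂ :=
  ∑ a ∈ Finset.range (2 * m), C ((x' a : ℂ) * I ^ (a % 2)) * X ^ (a / 2)

lemma prPolyC_coeff (m : ℕ) (x' : ℕ → ℝ) (k : ℕ) (hk : k < m) :
    (prPolyC m x').coeff k = (x' (2 * k) : ℂ) + (x' (2 * k + 1) : ℂ) * I := by
  simp only [prPolyC, finset_sum_coeff, coeff_C_mul, coeff_X_pow]
  rw [prSumDouble m (fun a => (x' a : ℂ) * I ^ (a % 2) * if k = a / 2 then 1 else 0)]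
  have key : ∀ k' ∈ Finset.range m,
      ((x' (2 * k') : ℂ) * I ^ ((2 * k') % 2) * if k = (2 * k') / 2 then 1 else 0)
        + ((x' (2 * k' + 1) : ℂ) * I ^ ((2 * k' + 1) % 2)
            * if k = (2 * k' + 1) / 2 then 1 else 0)
      = if k = k' then (x' (2 * k) : ℂ) + (x' (2 * k + 1) : ℂ) * I else 0 := by
    intro k' _
    have h1 : (2 * k') / 2 = k' := by omega
    have h2 : (2 * k' + 1) / 2 = k' := by omega
    have h3 : (2 * k') % 2 = 0 := by omega
    have h4 : (2 * k' + 1) % 2 = 1 := by omega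
    rw [h1, h2, h3, h4]
    by_cases h : k = k'
    · subst h; simp
    · simp [h]
  rw [Finset.sum_congr rfl key, Finset.sum_ite_eq]
  simp [Finset.mem_range, hk]

lemma prPolyC_natDegree (m : ℕ) (x' : ℕ → ℝ) (hm : 1 ≤ m) :
    (prPolyC m x').natDegree ≤ m - 1 := by
  refine natDegree_sum_le_of_forall_le _ _ fun a ha => ?_
  refine (natDegree_C_mul_X_pow_le _ _).trans ?_
  have := Finset.mem_range.mp ha; omega

lemma prPolyC_eval {m : ℕ} (x : Fin (2 * m) → ℝ) (t : ℝ) :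
    (prPolyC m (prExt x)).eval (t : ℂ)
      = ∑ a : Fin (2 * m), (x a : ℂ) * I ^ ((a : ℕ) % 2) * (t : ℂ) ^ ((a : ℕ) / 2) := by
  rw [prPolyC, eval_finset_sum]
  rw [← Fin.sum_univ_eq_sum_range
    (fun n => eval (t : ℂ) (C ((prExt x n : ℂ) * I ^ (n % 2)) * X ^ (n / 2))) (2 * m)]
  refine Finset.sum_congr rfl fun a _ => ?_
  simp [prExt, a.isLt]

lemma prQuadC {m : ℕ} (x : Fin (2 * m) → ℝ) (w : ℂ) (t : ℝ) :
    x ⬝ᵥ (Matrix.of fun a b : Fin (2 * m) =>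
        t ^ ((a : ℕ) / 2 + (b : ℕ) / 2) * (w * I ^ ((a : ℕ) % 2 + (b : ℕ) % 2)).re) *ᵥ x
      = (w * ((prPolyC m (prExt x)).eval (t : ℂ)) ^ 2).re := by
  rw [prPolyC_eval, sq, Finset.sum_mul_sum, Finset.mul_sum]
  simp only [Finset.mul_sum]
  rw [re_sum]
  simp only [re_sum]
  simp only [dotProduct, Matrix.mulVec, Matrix.of_apply, Finset.mul_sum]
  refine Finset.sum_congr rfl fun a _ => Finset.sum_congr rfl fun b _ => ?_
  have : w * ((x a : ℂ) * I ^ ((a : ℕ) % 2) * (t : ℂ) ^ ((a : ℕ) / 2)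
        * ((x b : ℂ) * I ^ ((b : ℕ) % 2) * (t : ℂ) ^ ((b : ℕ) / 2)))
      = ((x a * (t ^ ((a : ℕ) / 2 + (b : ℕ) / 2)) * x b : ℝ) : ℂ)
        * (w * I ^ ((a : ℕ) % 2 + (b : ℕ) % 2)) := by
    push_cast
    ring
  rw [this, re_ofReal_mul]
  ring

end

end PRAux

open PRAux Polynomial Finset Complex in
theorem stmt_15 (d : ℕ) (hd : 1 ≤ d) :
    (Odd d → ∃ A : Fin (2 * d - 1) → Matrix (Fin d) (Fin d) ℝ,
      (∀ j, (A j).IsSymm) ∧ PhaseRetrievableR A) ∧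
    (Even d → ∃ A : Fin (2 * d - 2) → Matrix (Fin d) (Fin d) ℝ,
      (∀ j, (A j).IsSymm) ∧ PhaseRetrievableR A) := by
  constructor
  · -- odd case (in fact works for any d): rank-one Vandermonde measurements
    intro _
    refine ⟨fun j => Matrix.of fun a b : Fin d => (((j : ℕ) : ℝ)) ^ ((a : ℕ) + (b : ℕ)),
      fun j => ?_, ?_⟩
    · show _ = _
      ext a b
      simp only [Matrix.transpose_apply, Matrix.of_apply]
      rw [Nat.add_comm]
    · intro x y h
      have hkey : prPolyR d (prExt x) ^ 2 - prPolyR d (prExt y) ^ 2 = 0 := by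
        refine Polynomial.eq_zero_of_natDegree_lt_card_of_eval_eq_zero _
          (f := fun j : Fin (2 * d - 1) => ((j : ℕ) : ℝ))
          (fun j₁ j₂ hj => Fin.val_injective (Nat.cast_injective hj)) (fun j => ?_) ?_
        · rw [eval_sub, eval_pow, eval_pow, sub_eq_zero, ← prQuadR x, ← prQuadR y]
          exact h j
        · rw [Fintype.card_fin]
          have hx := prPolyR_natDegree d (prExt x) hd
          have hy := prPolyR_natDegree d (prExt y) hd
          have h1 : (prPolyR d (prExt x) ^ 2).natDegree ≤ 2 * (d - 1) :=
            natDegree_pow_le.trans (by omega)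
          have h2 : (prPolyR d (prExt y) ^ 2).natDegree ≤ 2 * (d - 1) :=
            natDegree_pow_le.trans (by omega)
          exact lt_of_le_of_lt ((natDegree_sub_le _ _).trans (max_le h1 h2)) (by omega)
      have hfac : (prPolyR d (prExt x) - prPolyR d (prExt y))
          * (prPolyR d (prExt x) + prPolyR d (prExt y)) = 0 := by
        linear_combination hkey
      rcases mul_eq_zero.mp hfac with hc | hc
      · left; funext a
        have hco := congrArg (fun p => Polynomial.coeff p (a : ℕ)) (sub_eq_zero.mp hc)
        simpa [prPolyR_coeff, Finset.mem_range, a.isLt, prExt_coe] using hco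
      · right; funext a
        have hc' : prPolyR d (prExt x) = - prPolyR d (prExt y) := by linear_combination hc
        have hco := congrArg (fun p => Polynomial.coeff p (a : ℕ)) hc'
        simpa [prPolyR_coeff, Finset.mem_range, a.isLt, prExt_coe] using hco
  · -- even case: complex pairing, 2d - 2 measurements
    intro he
    obtain ⟨m, rfl⟩ : ∃ m, d = 2 * m := ⟨d / 2, by obtain ⟨r, hr⟩ := he; omega⟩
    have hm1 : 1 ≤ m := by omega
    refine ⟨fun j => Matrix.of fun a b : Fin (2 * m) =>
        ((((j : ℕ) / 2 : ℕ)) : ℝ) ^ ((a : ℕ) / 2 + (b : ℕ) / 2)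
          * ((if (j : ℕ) % 2 = 0 then (1 : ℂ) else -I)
              * I ^ ((a : ℕ) % 2 + (b : ℕ) % 2)).re,
      fun j => ?_, ?_⟩
    · show _ = _
      ext a b
      simp only [Matrix.transpose_apply, Matrix.of_apply]
      rw [Nat.add_comm ((b : ℕ) / 2) ((a : ℕ) / 2), Nat.add_comm ((b : ℕ) % 2) ((a : ℕ) % 2)]
    · intro x y h
      have h' : ∀ n : ℕ, n < 2 * (2 * m) - 2 →
          ((if n % 2 = 0 then (1 : ℂ) else -I)
              * ((prPolyC m (prExt x)).eval (((n / 2 : ℕ) : ℝ) : ℂ)) ^ 2).re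
            = ((if n % 2 = 0 then (1 : ℂ) else -I)
              * ((prPolyC m (prExt y)).eval (((n / 2 : ℕ) : ℝ) : ℂ)) ^ 2).re := by
        intro n hn
        have hh := h ⟨n, hn⟩
        rw [prQuadC, prQuadC] at hh
        exact hh
      have hkey : prPolyC m (prExt x) ^ 2 - prPolyC m (prExt y) ^ 2 = 0 := by
        refine Polynomial.eq_zero_of_natDegree_lt_card_of_eval_eq_zero _
          (f := fun i : Fin (2 * m - 1) => ((i : ℕ) : ℂ))
          (fun i₁ i₂ hi => Fin.val_injective (Nat.cast_injective hi)) (fun i => ?_) ?_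
        · have hi := i.isLt
          have h0 := h' (2 * (i : ℕ)) (by omega)
          have h1 := h' (2 * (i : ℕ) + 1) (by omega)
          rw [show (2 * (i : ℕ)) % 2 = 0 from by omega,
            show (2 * (i : ℕ)) / 2 = (i : ℕ) from by omega, if_pos rfl, one_mul, one_mul] at h0
          rw [show (2 * (i : ℕ) + 1) % 2 = 1 from by omega,
            show (2 * (i : ℕ) + 1) / 2 = (i : ℕ) from by omega,
            if_neg (by norm_num)] at h1
          have him : ∀ z : ℂ, (-I * z).re = z.im := fun z => by simp
          rw [him, him] at h1
          rw [show (((i : ℕ) : ℝ) : ℂ) = ((i : ℕ) : ℂ) from by push_cast; ring] at h0 h1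
          rw [eval_sub, eval_pow, eval_pow, sub_eq_zero]
          exact Complex.ext h0 h1
        · rw [Fintype.card_fin]
          have hx := prPolyC_natDegree m (prExt x) hm1
          have hy := prPolyC_natDegree m (prExt y) hm1
          have h1 : (prPolyC m (prExt x) ^ 2).natDegree ≤ 2 * (m - 1) :=
            natDegree_pow_le.trans (by omega)
          have h2 : (prPolyC m (prExt y) ^ 2).natDegree ≤ 2 * (m - 1) :=
            natDegree_pow_le.trans (by omega)
          exact lt_of_le_of_lt ((natDegree_sub_le _ _).trans (max_le h1 h2)) (by omega)
      have hfac : (prPolyC m (prExt x) - prPolyC m (prExt y))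
          * (prPolyC m (prExt x) + prPolyC m (prExt y)) = 0 := by
        linear_combination hkey
      rcases mul_eq_zero.mp hfac with hc | hc
      · left; funext a
        have hk : (a : ℕ) / 2 < m := by have := a.isLt; omega
        have hco := congrArg (fun p => Polynomial.coeff p ((a : ℕ) / 2)) (sub_eq_zero.mp hc)
        rw [prPolyC_coeff m _ _ hk, prPolyC_coeff m _ _ hk] at hco
        have hre := congrArg Complex.re hco
        have him := congrArg Complex.im hco
        simp at hre him
        rcases Nat.mod_two_eq_zero_or_one (a : ℕ) with hp | hp
        · have ha : 2 * ((a : ℕ) / 2) = (a : ℕ) := by omega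
          rw [← prExt_coe x a, ← prExt_coe y a, ← ha]
          exact hre
        · have ha : 2 * ((a : ℕ) / 2) + 1 = (a : ℕ) := by omega
          rw [← prExt_coe x a, ← prExt_coe y a, ← ha]
          exact him
      · right; funext a
        have hk : (a : ℕ) / 2 < m := by have := a.isLt; omega
        have hc' : prPolyC m (prExt x) = - prPolyC m (prExt y) := by linear_combination hc
        have hco := congrArg (fun p => Polynomial.coeff p ((a : ℕ) / 2)) hc'
        simp only [Polynomial.coeff_neg] at hco
        rw [prPolyC_coeff m _ _ hk, prPolyC_coeff m _ _ hk] at hco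
        have hre := congrArg Complex.re hco
        have him := congrArg Complex.im hco
        simp at hre him
        have hgoal : (-y) a = -(y a) := rfl
        rw [hgoal]
        rcases Nat.mod_two_eq_zero_or_one (a : ℕ) with hp | hp
        · have ha : 2 * ((a : ℕ) / 2) = (a : ℕ) := by omega
          rw [← prExt_coe x a, ← prExt_coe y a, ← ha]
          exact hre
        · have ha : 2 * ((a : ℕ) / 2) + 1 = (a : ℕ) := by omega
          rw [← prExt_coe x a, ← prExt_coe y a, ← ha]
          exact him
end
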